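/- arXiv:2303.03060 — 8 statements merged into one kernel-verified Lean document; each statement's English description precedes it below -/
import Mathlib

section
/- There exist constants c_s > 0 and r₀ ∈ (0,1) such that for every r ∈ (0, r₀), the two-dimensional Lebesgue measure of the set {x ∈ (0,1)×(0,1) : |y(x) − 1| < r} is at most c_s · r. -/
/-!
Near its maximum `sin (π t)` falls off at least quadratically: `sin (π t) ≤ 1 - 2 (t - 1/2)²`
(Jordan-type bound `cos z ≤ 1 - 2 z² / π²` for `|z| ≤ π`). On the open square both factors
of `y` lie in `(0, 1]`, so `|y(x) - 1| < r` forces each factor above `1 - r`, hence each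
coordinate within `√(r/2)` of `1/2`. The sublevel set therefore sits in a square of area `2 r`.
-/

open Real MeasureTheory Filter Set

/-- `y(x₁,x₂) = sin(π x₁) sin(π x₂)`. -/
noncomputable def ybar (x : ℝ × ℝ) : ℝ := Real.sin (π * x.1) * Real.sin (π * x.2)

lemma sin_pi_mul_le_one_sub_sq {t : ℝ} (ht : |t - 1 / 2| ≤ 1) :
    sin (π * t) ≤ 1 - 2 * (t - 1 / 2) ^ 2 := by
  have hshift : sin (π * t) = cos (π * (t - 1 / 2)) := by
    rw [← sin_add_pi_div_two]; ring_nf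
  have hz : |π * (t - 1 / 2)| ≤ π := by
    rw [abs_mul, abs_of_pos pi_pos]
    exact mul_le_of_le_one_right pi_pos.le ht
  calc sin (π * t) ≤ 1 - 2 / π ^ 2 * (π * (t - 1 / 2)) ^ 2 :=
        hshift ▸ cos_le_one_sub_mul_cos_sq hz
    _ = 1 - 2 * (t - 1 / 2) ^ 2 := by field_simp

lemma mem_Ioo_of_one_sub_lt_sin_pi_mul {r t : ℝ} (ht : |t - 1 / 2| ≤ 1)
    (h : 1 - r < sin (π * t)) : t ∈ Ioo (1 / 2 - √(r / 2)) (1 / 2 + √(r / 2)) := by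
  have hsq : (t - 1 / 2) ^ 2 < r / 2 := by linarith [sin_pi_mul_le_one_sub_sq ht]
  obtain ⟨hlo, hhi⟩ := Real.sq_lt.mp hsq
  constructor <;> linarith

lemma sin_pi_mul_pos {t : ℝ} (ht : t ∈ Ioo (0 : ℝ) 1) : 0 < sin (π * t) :=
  sin_pos_of_mem_Ioo ⟨by nlinarith [pi_pos, ht.1], by nlinarith [pi_pos, ht.2]⟩

lemma abs_sub_half_le_one {t : ℝ} (ht : t ∈ Ioo (0 : ℝ) 1) : |t - 1 / 2| ≤ 1 :=
  abs_le.mpr ⟨by linarith [ht.1], by linarith [ht.2]⟩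

lemma setOf_abs_ybar_sub_one_lt_subset (r : ℝ) :
    {x : ℝ × ℝ | x ∈ Ioo (0 : ℝ) 1 ×ˢ Ioo (0 : ℝ) 1 ∧ |ybar x - 1| < r} ⊆
      Ioo (1 / 2 - √(r / 2)) (1 / 2 + √(r / 2)) ×ˢ Ioo (1 / 2 - √(r / 2)) (1 / 2 + √(r / 2)) := by
  rintro ⟨x₁, x₂⟩ ⟨⟨hx₁, hx₂⟩, hy⟩
  have hprod : 1 - r < sin (π * x₁) * sin (π * x₂) := by
    have := (abs_lt.mp hy).1
    simp only [ybar] at this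
    linarith
  have h₁ : 1 - r < sin (π * x₁) :=
    hprod.trans_le (mul_le_of_le_one_right (sin_pi_mul_pos hx₁).le (sin_le_one _))
  have h₂ : 1 - r < sin (π * x₂) :=
    hprod.trans_le (mul_le_of_le_one_left (sin_pi_mul_pos hx₂).le (sin_le_one _))
  exact ⟨mem_Ioo_of_one_sub_lt_sin_pi_mul (abs_sub_half_le_one hx₁) h₁,
    mem_Ioo_of_one_sub_lt_sin_pi_mul (abs_sub_half_le_one hx₂) h₂⟩

lemma volume_Ioo_prod_Ioo_self (c : ℝ) {δ : ℝ} (hδ : 0 ≤ δ) :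
    volume (Ioo (c - δ) (c + δ) ×ˢ Ioo (c - δ) (c + δ)) = ENNReal.ofReal ((2 * δ) ^ 2) := by
  rw [Measure.volume_eq_prod, Measure.prod_prod, Real.volume_Ioo, ← ENNReal.ofReal_mul (by linarith)]
  ring_nf

lemma volume_setOf_abs_ybar_sub_one_lt_le {r : ℝ} (hr : 0 ≤ r) :
    volume {x : ℝ × ℝ | x ∈ Ioo (0 : ℝ) 1 ×ˢ Ioo (0 : ℝ) 1 ∧ |ybar x - 1| < r}
      ≤ ENNReal.ofReal (2 * r) := by
  have harea : (2 * √(r / 2)) ^ 2 = 2 * r := by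
    rw [mul_pow, sq_sqrt (by linarith)]; ring
  calc _ ≤ _ := measure_mono (setOf_abs_ybar_sub_one_lt_subset r)
    _ = ENNReal.ofReal (2 * r) := by rw [volume_Ioo_prod_Ioo_self _ (sqrt_nonneg _), harea]

/-- There exist `c_s > 0` and `r₀ ∈ (0,1)` such that for every `r ∈ (0, r₀)`, the
two-dimensional Lebesgue measure of `{x ∈ (0,1)² : |y(x) − 1| < r}` is at most `c_s · r`. -/
theorem stmt0 :
    ∃ cs : ℝ, 0 < cs ∧ ∃ r₀ : ℝ, r₀ ∈ Set.Ioo (0:ℝ) 1 ∧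
      ∀ r ∈ Set.Ioo (0:ℝ) r₀,
        volume {x : ℝ × ℝ | x ∈ Set.Ioo (0:ℝ) 1 ×ˢ Set.Ioo (0:ℝ) 1 ∧ |ybar x - 1| < r}
          ≤ ENNReal.ofReal (cs * r) :=
  ⟨2, two_pos, 1 / 2, by norm_num, fun _ hr => volume_setOf_abs_ybar_sub_one_lt_le hr.1.le⟩
end

section
/- For every fixed t̄ ∈ (0,1), the one-sided limit lim_{r→0⁺} (1/r) · ∫_{(0,1)²} 1_{{|y(x) − t̄| < r}} ( |∂₁y(x)| + |∂₂y(x)| ) dx exists and equals 8 · (1 − (2/π)·arcsin t̄). -/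
/-!
For fixed `x₁` the map `x₂ ↦ y(x₁, x₂)` increases from `0` to `sin (π x₁)` on `(0, 1/2)` and
decreases back to `0` on `(1/2, 1)`, so the one-dimensional change of variables `u = y(x₁, x₂)`
turns `∫ |∂₂y| 1_{|y - t| < r} dx₂` into twice the length of `(0, sin (π x₁)) ∩ (t - r, t + r)`,
i.e. `2 (min (sin (π x₁)) (t + r) - min (sin (π x₁)) (t - r))`. The `∂₁y` term contributes the same
by the symmetry `y(x₁, x₂) = y(x₂, x₁)`. Hence the integral is `4 (F (t + r) - F (t - r))` with
`F c = ∫₀¹ min (sin (π x)) c dx = 2/π (1 - √(1 - c²)) + c - 2/π c arcsin c`, and the limit is the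
symmetric derivative `8 F' t = 8 (1 - 2/π arcsin t)`.
-/

open Real MeasureTheory Filter Set

/-- `∂₁ y (x₁,x₂) = π cos(π x₁) sin(π x₂)`. -/
noncomputable def d1y (x : ℝ × ℝ) : ℝ := π * Real.cos (π * x.1) * Real.sin (π * x.2)

/-- `∂₂ y (x₁,x₂) = π sin(π x₁) cos(π x₂)`. -/
noncomputable def d2y (x : ℝ × ℝ) : ℝ := π * Real.sin (π * x.1) * Real.cos (π * x.2)

open Topology

section SymmetricSlope
variable {𝕜 F : Type*} [NontriviallyNormedField 𝕜] [NormedAddCommGroup F] [NormedSpace 𝕜 F]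
  {f : 𝕜 → F} {f' : F} {x : 𝕜}

theorem HasDerivAt.tendsto_symmetric_slope_zero (h : HasDerivAt f f' x) :
    Tendsto (fun t ↦ t⁻¹ • (f (x + t) - f (x - t))) (𝓝[≠] 0) (𝓝 ((2 : 𝕜) • f')) := by
  have hneg : Tendsto (fun t : 𝕜 ↦ -t) (𝓝[≠] 0) (𝓝[≠] 0) := by
    simpa using continuous_neg.continuousWithinAt.tendsto_nhdsWithin (s := {0}ᶜ) (x := (0 : 𝕜))
      (fun t ht ↦ neg_ne_zero.mpr ht)
  have hsum := h.tendsto_slope_zero.add (h.tendsto_slope_zero.comp hneg)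
  rw [two_smul]
  refine hsum.congr fun t ↦ ?_
  simp only [Function.comp_apply, ← sub_eq_add_neg, inv_neg, neg_smul, smul_sub]
  abel

end SymmetricSlope

section UnimodalSubstitution
variable {F : Type*} [NormedAddCommGroup F] [NormedSpace ℝ F] {f f' : ℝ → ℝ} {g : ℝ → F}
  {a b c : ℝ}

theorem integral_Icc_abs_deriv_smul_of_deriv_nonneg_of_deriv_nonpos (hab : a ≤ b) (hbc : b ≤ c)
    (hf : ContinuousOn f (Icc a c)) (hff' : ∀ x ∈ Ioo a c, HasDerivAt f (f' x) x)
    (hf'₁ : ∀ x ∈ Ioo a b, 0 ≤ f' x) (hf'₂ : ∀ x ∈ Ioo b c, f' x ≤ 0)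
    (hg₁ : IntegrableOn g (Icc (f a) (f b))) (hg₂ : IntegrableOn g (Icc (f c) (f b))) :
    ∫ x in Icc a c, |f' x| • g (f x) =
      (∫ u in Icc (f a) (f b), g u) + ∫ u in Icc (f c) (f b), g u := by
  have hcont₁ : ContinuousOn f (Icc a b) := hf.mono (Icc_subset_Icc_right hbc)
  have hcont₂ : ContinuousOn f (Icc b c) := hf.mono (Icc_subset_Icc_left hab)
  have hff'₁ : ∀ x ∈ Ioo a b, HasDerivAt f (f' x) x :=
    fun x hx ↦ hff' x ⟨hx.1, hx.2.trans_le hbc⟩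
  have hff'₂ : ∀ x ∈ Ioo b c, HasDerivAt f (f' x) x :=
    fun x hx ↦ hff' x ⟨hab.trans_lt hx.1, hx.2⟩
  have heq₁ : EqOn (fun x ↦ |f' x| • g (f x)) (fun x ↦ f' x • g (f x)) (Ioo a b) :=
    fun x hx ↦ by simp only [abs_of_nonneg (hf'₁ x hx)]
  have heq₂ : EqOn (fun x ↦ |f' x| • g (f x)) (fun x ↦ -(f' x • g (f x))) (Ioo b c) :=
    fun x hx ↦ by simp only [abs_of_nonpos (hf'₂ x hx), neg_smul]
  have hint₁ : IntegrableOn (fun x ↦ |f' x| • g (f x)) (Icc a b) := by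
    rw [integrableOn_Icc_iff_integrableOn_Ioo]
    refine IntegrableOn.congr_fun ?_ heq₁.symm measurableSet_Ioo
    rw [← integrableOn_Icc_iff_integrableOn_Ioo]
    exact (integrableOn_Icc_deriv_smul_iff_of_deriv_nonneg hcont₁ hff'₁ hf'₁ hab).mpr hg₁
  have hint₂ : IntegrableOn (fun x ↦ |f' x| • g (f x)) (Ioc b c) := by
    rw [integrableOn_Ioc_iff_integrableOn_Ioo]
    refine IntegrableOn.congr_fun ?_ heq₂.symm measurableSet_Ioo
    rw [← integrableOn_Icc_iff_integrableOn_Ioo]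
    exact ((integrableOn_Icc_deriv_smul_iff_of_deriv_nonpos hcont₂ hff'₂ hf'₂ hbc).mpr hg₂).neg
  have hdisj : Disjoint (Icc a b) (Ioc b c) :=
    (Iic_disjoint_Ioc le_rfl).mono_left Icc_subset_Iic_self
  rw [← Icc_union_Ioc_eq_Icc hab hbc, setIntegral_union hdisj measurableSet_Ioc hint₁ hint₂,
    integral_Icc_eq_integral_Ioo, integral_Ioc_eq_integral_Ioo,
    setIntegral_congr_fun measurableSet_Ioo heq₁, setIntegral_congr_fun measurableSet_Ioo heq₂,
    ← integral_Icc_eq_integral_Ioo, ← integral_Icc_eq_integral_Ioo, integral_neg,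
    integral_Icc_deriv_smul_of_deriv_nonneg hcont₁ hff'₁ hf'₁ hab,
    integral_Icc_deriv_smul_of_deriv_nonpos hcont₂ hff'₂ hf'₂ hbc, neg_neg]

end UnimodalSubstitution

theorem integral_Icc_indicator_ball {s t r : ℝ} (hr : 0 ≤ r) (hrt : r ≤ t) :
    ∫ u in Icc 0 s, (Metric.ball t r).indicator 1 u = min s (t + r) - min s (t - r) := by
  have hball := Metric.isOpen_ball (x := t) (ε := r) |>.measurableSet
  rw [integral_Icc_eq_integral_Ioo, integral_indicator_one hball, measureReal_restrict_apply hball,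
    Real.ball_eq_Ioo, Ioo_inter_Ioo, Real.volume_real_Ioo, max_eq_left (sub_nonneg.2 hrt)]
  simp only [min_def, max_def]
  split_ifs <;> linarith


theorem integral_sin_pi_mul (u v : ℝ) :
    ∫ x in u..v, sin (π * x) = (cos (π * u) - cos (π * v)) / π := by
  rw [intervalIntegral.integral_comp_mul_left sin pi_ne_zero, integral_sin, smul_eq_mul]
  field_simp

theorem sin_pi_mul_le_sin_pi_mul_of_le {a x : ℝ} (hx : 0 ≤ x) (hxa : x ≤ a) (ha : a ≤ 1 / 2) :
    sin (π * x) ≤ sin (π * a) := by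
  have := pi_pos
  apply sin_le_sin_of_le_of_le_pi_div_two <;> nlinarith

theorem sin_pi_mul_le_sin_pi_mul_of_mem_Icc {a x : ℝ} (ha : 0 ≤ a) (hx : x ∈ Icc a (1 - a)) :
    sin (π * a) ≤ sin (π * x) := by
  rcases le_total x (1 / 2) with hx' | hx'
  · exact sin_pi_mul_le_sin_pi_mul_of_le ha hx.1 hx'
  · rw [← sin_pi_sub (π * x), show π - π * x = π * (1 - x) by ring]
    exact sin_pi_mul_le_sin_pi_mul_of_le ha (by linarith [hx.2]) (by linarith)

noncomputable def sinCapIntegral (c : ℝ) : ℝ := ∫ x in Ioo 0 1, min (sin (π * x)) c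

theorem sinCapIntegral_eq {c : ℝ} (hc₀ : 0 ≤ c) (hc₁ : c ≤ 1) :
    sinCapIntegral c = 2 / π * (1 - √(1 - c ^ 2)) + c - 2 / π * (c * arcsin c) := by
  have hπ := pi_pos
  set a := arcsin c / π
  have hπa : π * a = arcsin c := mul_div_cancel₀ _ hπ.ne'
  have ha₀ : 0 ≤ a := div_nonneg (arcsin_nonneg.mpr hc₀) hπ.le
  have ha : a ≤ 1 / 2 := by
    rw [div_le_iff₀ hπ]; linarith [arcsin_le_pi_div_two c]
  have hsin : sin (π * a) = c := by rw [hπa, sin_arcsin (by linarith) hc₁]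
  have hcos : cos (π * a) = √(1 - c ^ 2) := by rw [hπa, cos_arcsin]
  have hcont : Continuous fun x ↦ min (sin (π * x)) c := by fun_prop
  have h₁ : ∫ x in 0..a, min (sin (π * x)) c = ∫ x in 0..a, sin (π * x) := by
    refine intervalIntegral.integral_congr fun x hx ↦ min_eq_left ?_
    rw [uIcc_of_le ha₀] at hx
    exact hsin ▸ sin_pi_mul_le_sin_pi_mul_of_le hx.1 hx.2 ha
  have h₂ : ∫ x in a..1 - a, min (sin (π * x)) c = ∫ _ in a..1 - a, c := by
    refine intervalIntegral.integral_congr fun x hx ↦ min_eq_right ?_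
    rw [uIcc_of_le (by linarith)] at hx
    exact hsin ▸ sin_pi_mul_le_sin_pi_mul_of_mem_Icc ha₀ hx
  have h₃ : ∫ x in 1 - a..1, min (sin (π * x)) c = ∫ x in 1 - a..1, sin (π * x) := by
    refine intervalIntegral.integral_congr fun x hx ↦ min_eq_left ?_
    rw [uIcc_of_le (by linarith)] at hx
    rw [← sin_pi_sub (π * x), show π - π * x = π * (1 - x) by ring]
    exact hsin ▸ sin_pi_mul_le_sin_pi_mul_of_le (by linarith [hx.2]) (by linarith [hx.1]) ha
  have hsplit : ∫ x in (0 : ℝ)..1, min (sin (π * x)) c = (∫ x in 0..a, min (sin (π * x)) c) +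
      (∫ x in a..1 - a, min (sin (π * x)) c) + ∫ x in 1 - a..1, min (sin (π * x)) c := by
    rw [intervalIntegral.integral_add_adjacent_intervals (hcont.intervalIntegrable _ _)
      (hcont.intervalIntegrable _ _), intervalIntegral.integral_add_adjacent_intervals
      (hcont.intervalIntegrable _ _) (hcont.intervalIntegrable _ _)]
  rw [sinCapIntegral, ← integral_Ioc_eq_integral_Ioo, ← intervalIntegral.integral_of_le zero_le_one,
    hsplit, h₁, h₂, h₃, integral_sin_pi_mul, integral_sin_pi_mul, intervalIntegral.integral_const,
    smul_eq_mul, show π * (1 - a) = π - π * a by ring, cos_pi_sub, hcos]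
  simp only [mul_zero, cos_zero, mul_one, cos_pi, a]
  field_simp
  ring

theorem hasDerivAt_sinCapIntegral {c : ℝ} (hc₀ : 0 < c) (hc₁ : c < 1) :
    HasDerivAt sinCapIntegral (1 - 2 / π * arcsin c) c := by
  have hsq : 0 < 1 - c ^ 2 := by nlinarith
  have hsqrt : HasDerivAt (fun c : ℝ ↦ √(1 - c ^ 2)) (-(2 * c) / (2 * √(1 - c ^ 2))) c := by
    simpa using ((hasDerivAt_pow 2 c).const_sub 1).sqrt hsq.ne'
  have harcsin : HasDerivAt arcsin (1 / √(1 - c ^ 2)) c :=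
    hasDerivAt_arcsin (by linarith) hc₁.ne
  have hclosed := (((hsqrt.const_sub 1).const_mul (2 / π)).add (hasDerivAt_id c)).sub
    (((hasDerivAt_id c).mul harcsin).const_mul (2 / π))
  refine (hclosed.congr_deriv ?_).congr_of_eventuallyEq ?_
  · field_simp [(sqrt_pos.mpr hsq).ne']
    simp only [id]
    ring
  · filter_upwards [Icc_mem_nhds hc₀ hc₁] with x hx
    exact sinCapIntegral_eq hx.1 hx.2

theorem ybar_swap (x : ℝ × ℝ) : ybar x.swap = ybar x := mul_comm _ _

theorem d1y_swap (x : ℝ × ℝ) : d1y x.swap = d2y x := by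
  simp only [d1y, d2y, Prod.fst_swap, Prod.snd_swap]
  ring

theorem abs_d2y_le (x : ℝ × ℝ) : |d2y x| ≤ π := by
  rw [d2y, abs_mul, abs_mul, abs_of_pos pi_pos]
  calc π * |sin (π * x.1)| * |cos (π * x.2)| ≤ π * 1 * 1 := by
        gcongr
        exacts [abs_sin_le_one _, abs_cos_le_one _]
    _ = π := by ring

theorem hasDerivAt_ybar_snd (x₁ x₂ : ℝ) :
    HasDerivAt (fun x₂ ↦ ybar (x₁, x₂)) (d2y (x₁, x₂)) x₂ := by
  refine (((hasDerivAt_id x₂).const_mul π).sin.const_mul (sin (π * x₁))).congr_deriv ?_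
  simp only [d2y, id]
  ring

theorem integral_Ioo_abs_d2y_mul_comp_ybar {g : ℝ → ℝ} {x₁ : ℝ} (hx₁ : x₁ ∈ Icc 0 1)
    (hg : IntegrableOn g (Icc 0 (sin (π * x₁)))) :
    ∫ x₂ in Ioo 0 1, |d2y (x₁, x₂)| * g (ybar (x₁, x₂)) =
      2 * ∫ u in Icc 0 (sin (π * x₁)), g u := by
  have hπ := pi_pos
  have hs : 0 ≤ sin (π * x₁) := sin_nonneg_of_nonneg_of_le_pi (by nlinarith [hx₁.1])
    (by nlinarith [hx₁.2])
  have h₀ : ybar (x₁, 0) = 0 := by simp [ybar]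
  have h₁ : ybar (x₁, 1) = 0 := by simp [ybar]
  have hhalf : ybar (x₁, 1 / 2) = sin (π * x₁) := by simp [ybar, ← div_eq_mul_inv]
  have key := integral_Icc_abs_deriv_smul_of_deriv_nonneg_of_deriv_nonpos
    (f := fun x₂ ↦ ybar (x₁, x₂)) (f' := fun x₂ ↦ d2y (x₁, x₂)) (a := 0) (b := 1 / 2) (c := 1)
    (g := g) (by norm_num) (by norm_num)
    (fun x _ ↦ (hasDerivAt_ybar_snd x₁ x).continuousAt.continuousWithinAt)
    (fun x _ ↦ hasDerivAt_ybar_snd x₁ x)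
    (fun x hx ↦ mul_nonneg (mul_nonneg hπ.le hs)
      (cos_nonneg_of_mem_Icc ⟨by nlinarith [hx.1], by nlinarith [hx.2]⟩))
    (fun x hx ↦ mul_nonpos_of_nonneg_of_nonpos (mul_nonneg hπ.le hs)
      (cos_nonpos_of_pi_div_two_le_of_le (by nlinarith [hx.1]) (by nlinarith [hx.2])))
    (by rwa [h₀, hhalf]) (by rwa [h₁, hhalf])
  simp only [h₀, h₁, hhalf, smul_eq_mul] at key
  rw [← integral_Icc_eq_integral_Ioo, key, two_mul]

theorem setIntegral_abs_d1y_add_abs_d2y_mul_comp_ybar {g : ℝ → ℝ} {C : ℝ} (hg : Measurable g)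
    (hgC : ∀ u, |g u| ≤ C) :
    ∫ x in Ioo 0 1 ×ˢ Ioo 0 1, (|d1y x| + |d2y x|) * g (ybar x) =
      4 * ∫ x₁ in Ioo 0 1, ∫ u in Icc 0 (sin (π * x₁)), g u := by
  have hS : volume (Ioo (0 : ℝ) 1 ×ˢ Ioo (0 : ℝ) 1) ≠ ⊤ :=
    (Metric.isBounded_Ioo 0 1 |>.prod (Metric.isBounded_Ioo 0 1)).measure_lt_top.ne
  have hyc : Continuous ybar := by unfold ybar; fun_prop
  have hint : ∀ h : ℝ × ℝ → ℝ, Continuous h → (∀ x, |h x| ≤ π) →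
      IntegrableOn (fun x ↦ |h x| * g (ybar x)) (Ioo 0 1 ×ˢ Ioo 0 1) := fun h hc hb ↦
    Measure.integrableOn_of_bounded hS
      ((hc.abs.measurable.mul (hg.comp hyc.measurable)).aestronglyMeasurable) (M := π * C)
      (ae_of_all _ fun x ↦ by
        rw [norm_mul, norm_abs_eq_norm, Real.norm_eq_abs]
        exact mul_le_mul (hb x) (hgC _) (abs_nonneg _) pi_pos.le)
  have hint₂ := hint d2y (by unfold d2y; fun_prop) abs_d2y_le
  have hint₁ := hint d1y (by unfold d1y; fun_prop) fun x ↦ by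
    rw [← Prod.swap_swap x, d1y_swap]
    exact abs_d2y_le _
  have h₂ : ∫ x in Ioo 0 1 ×ˢ Ioo 0 1, |d2y x| * g (ybar x) =
      2 * ∫ x₁ in Ioo 0 1, ∫ u in Icc 0 (sin (π * x₁)), g u := by
    rw [Measure.volume_eq_prod, setIntegral_prod _ hint₂, ← integral_const_mul]
    refine setIntegral_congr_fun measurableSet_Ioo fun x₁ hx₁ ↦ ?_
    exact integral_Ioo_abs_d2y_mul_comp_ybar (Ioo_subset_Icc_self hx₁) <|
      Measure.integrableOn_of_bounded measure_Icc_lt_top.ne hg.aestronglyMeasurable (M := C)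
        (ae_of_all _ fun u ↦ (Real.norm_eq_abs _).trans_le (hgC u))
  have h₁ : ∫ x in Ioo 0 1 ×ˢ Ioo 0 1, |d1y x| * g (ybar x) =
      ∫ x in Ioo 0 1 ×ˢ Ioo 0 1, |d2y x| * g (ybar x) := by
    simpa only [Measure.volume_eq_prod, d1y_swap, ybar_swap] using
      (setIntegral_prod_swap (μ := volume) (ν := volume) (Ioo (0 : ℝ) 1) (Ioo (0 : ℝ) 1)
        fun x ↦ |d1y x| * g (ybar x)).symm
  simp only [add_mul]
  rw [integral_add hint₁ hint₂, h₁, h₂]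
  ring

theorem setIntegral_ite_abs_ybar_sub_lt {t r : ℝ} (hr : 0 ≤ r) (hrt : r ≤ t) :
    ∫ x in Ioo 0 1 ×ˢ Ioo 0 1, (if |ybar x - t| < r then |d1y x| + |d2y x| else 0) =
      4 * (sinCapIntegral (t + r) - sinCapIntegral (t - r)) := by
  have hind : ∀ x, (if |ybar x - t| < r then |d1y x| + |d2y x| else 0) =
      (|d1y x| + |d2y x|) * (Metric.ball t r).indicator 1 (ybar x) := fun x ↦ by
    by_cases h : |ybar x - t| < r <;> simp [h, Real.dist_eq]
  have hcap : ∀ c, IntegrableOn (fun x ↦ min (sin (π * x)) c) (Ioo 0 1) := fun c ↦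
    (Continuous.integrableOn_Icc (by fun_prop)).mono_set Ioo_subset_Icc_self
  simp_rw [hind]
  rw [setIntegral_abs_d1y_add_abs_d2y_mul_comp_ybar (C := 1)
    (measurable_one.indicator Metric.isOpen_ball.measurableSet)
    fun u ↦ by by_cases h : u ∈ Metric.ball t r <;> simp [h],
    sinCapIntegral, sinCapIntegral, ← integral_sub (hcap _) (hcap _)]
  congr 1
  exact setIntegral_congr_fun measurableSet_Ioo fun x _ ↦ integral_Icc_indicator_ball hr hrt

/-- For every fixed `t̄ ∈ (0,1)`, the one-sided limit
`lim_{r→0⁺} (1/r) ∫_{(0,1)²} 1_{|y−t̄|<r} (|∂₁y| + |∂₂y|) dx` exists and equals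
`8 (1 − (2/π) arcsin t̄)`. -/
theorem stmt3 (tbar : ℝ) (ht : tbar ∈ Set.Ioo (0:ℝ) 1) :
    Filter.Tendsto
      (fun r : ℝ => (1 / r) *
        ∫ x in Set.Ioo (0:ℝ) 1 ×ˢ Set.Ioo (0:ℝ) 1,
          (if |ybar x - tbar| < r then |d1y x| + |d2y x| else 0))
      (nhdsWithin (0:ℝ) (Set.Ioi 0))
      (nhds (8 * (1 - 2 / π * Real.arcsin tbar))) := by
  obtain ⟨ht₀, ht₁⟩ := ht
  have hlim := ((hasDerivAt_sinCapIntegral ht₀ ht₁).tendsto_symmetric_slope_zero.mono_left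
    (nhdsGT_le_nhdsNE 0)).const_mul 4
  rw [show 8 * (1 - 2 / π * arcsin tbar) = 4 * ((2 : ℝ) • (1 - 2 / π * arcsin tbar)) by
    rw [smul_eq_mul]; ring]
  refine hlim.congr' ?_
  filter_upwards [Ioo_mem_nhdsGT ht₀] with r hr
  rw [setIntegral_ite_abs_ybar_sub_lt hr.1.le hr.2.le, smul_eq_mul]
  ring
end

section
/- The one-sided limit lim_{r→0⁺} (1/r) · ∫_{(0,1)²} 1_{{|y(x) − 1| < r}} ( |∂₁y(x)| + |∂₂y(x)| ) dx exists and equals 0. -/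
open Real MeasureTheory Filter Set

/-!
On `(0,1)²` both sines are in `(0,1]`, so `|y - 1| < r` forces `1 - r < sin(π xᵢ)` for each
coordinate. This gives `|cos(π xᵢ)| ≤ √(2r)`, so the integrand is `O(√r)`, and, by the quadratic
upper bound on the cosine near its maximum, `|xᵢ - 1/2| < √(r/2)`, so the level set has measure at
most `2r`. Hence the quotient is `O(√r)`.
-/

lemma abs_cos_le_sqrt_of_one_sub_lt_sin {θ r : ℝ} (h : 1 - r < sin θ) : |cos θ| ≤ √(2 * r) := by
  -- `cos² θ = (1 - sin θ)(1 + sin θ)` with `1 - sin θ < r` and `1 + sin θ ≤ 2`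
  have hcos_sq : cos θ ^ 2 ≤ 2 * r := by
    nlinarith [sin_sq_add_cos_sq θ, sin_le_one θ, neg_one_le_sin θ]
  simpa only [sqrt_sq_eq_abs] using sqrt_le_sqrt hcos_sq

lemma abs_sub_half_lt_of_one_sub_lt_sin_pi_mul {t r : ℝ} (ht : t ∈ Icc (0 : ℝ) 1)
    (h : 1 - r < sin (π * t)) : |t - 1 / 2| < √(r / 2) := by
  have hθ : |π * t - π / 2| ≤ π := by
    rw [abs_le]
    constructor <;> nlinarith [pi_pos, ht.1, ht.2]
  have hcos := cos_le_one_sub_mul_cos_sq hθ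
  rw [cos_sub_pi_div_two] at hcos
  have hscale : 2 / π ^ 2 * (π * t - π / 2) ^ 2 = 2 * (t - 1 / 2) ^ 2 := by
    field_simp [pi_ne_zero]
  have hsq : (t - 1 / 2) ^ 2 < r / 2 := by linarith
  simpa only [sqrt_sq_eq_abs] using sqrt_lt_sqrt (sq_nonneg _) hsq

lemma one_sub_lt_of_one_sub_lt_mul {a b r : ℝ} (ha : 0 ≤ a) (hb : b ≤ 1) (h : 1 - r < a * b) :
    1 - r < a := by
  nlinarith

lemma one_sub_lt_sin_of_abs_ybar_sub_one_lt {x : ℝ × ℝ} {r : ℝ}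
    (hx : x ∈ Icc (0 : ℝ) 1 ×ˢ Icc (0 : ℝ) 1) (h : |ybar x - 1| < r) :
    1 - r < sin (π * x.1) ∧ 1 - r < sin (π * x.2) := by
  have hsin_nonneg {t : ℝ} (ht : t ∈ Icc (0 : ℝ) 1) : 0 ≤ sin (π * t) :=
    sin_nonneg_of_nonneg_of_le_pi (by nlinarith [pi_pos, ht.1]) (by nlinarith [pi_pos, ht.2])
  have hy : 1 - r < sin (π * x.1) * sin (π * x.2) := by
    rw [ybar] at h
    linarith [(abs_lt.1 h).1]
  exact ⟨one_sub_lt_of_one_sub_lt_mul (hsin_nonneg hx.1) (sin_le_one _) hy,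
    one_sub_lt_of_one_sub_lt_mul (hsin_nonneg hx.2) (sin_le_one _) (mul_comm (sin _) _ ▸ hy)⟩

lemma abs_d1y_add_abs_d2y_le {x : ℝ × ℝ} {r : ℝ} (h₁ : 1 - r < sin (π * x.1))
    (h₂ : 1 - r < sin (π * x.2)) : |d1y x| + |d2y x| ≤ 2 * π * √(2 * r) := by
  have hbound {u v : ℝ} (hu : |u| ≤ √(2 * r)) : |π * u * sin v| ≤ π * √(2 * r) := by
    rw [abs_mul, abs_mul, abs_of_pos pi_pos]
    calc π * |u| * |sin v| ≤ π * √(2 * r) * 1 := by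
          gcongr
          exact abs_sin_le_one v
      _ = π * √(2 * r) := mul_one _
  have hd1 : |d1y x| ≤ π * √(2 * r) := hbound (abs_cos_le_sqrt_of_one_sub_lt_sin h₁)
  have hd2 : |d2y x| ≤ π * √(2 * r) := by
    rw [d2y, mul_assoc, mul_comm (sin _), ← mul_assoc]
    exact hbound (abs_cos_le_sqrt_of_one_sub_lt_sin h₂)
  linarith

lemma setIntegral_abs_ybar_sub_one_lt_le {r : ℝ} (hr : 0 < r) :
    ∫ x in Ioo (0 : ℝ) 1 ×ˢ Ioo (0 : ℝ) 1, (if |ybar x - 1| < r then |d1y x| + |d2y x| else 0)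
      ≤ 2 * r * (2 * π * √(2 * r)) := by
  set J := Metric.ball (1 / 2 : ℝ) √(r / 2)
  set c := 2 * π * √(2 * r)
  have hJJ : MeasurableSet (J ×ˢ J) := measurableSet_ball.prod measurableSet_ball
  have hg : Integrable ((J ×ˢ J).indicator fun _ => c) := by
    refine (integrable_indicator_iff hJJ).2 (integrableOn_const ?_)
    rw [Measure.volume_eq_prod, Measure.prod_prod, Real.volume_ball]
    exact ENNReal.mul_ne_top ENNReal.ofReal_ne_top ENNReal.ofReal_ne_top
  have hg_nonneg : 0 ≤ (J ×ˢ J).indicator fun _ => c :=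
    indicator_nonneg fun _ _ => by positivity
  have hle : ∀ x ∈ Ioo (0 : ℝ) 1 ×ˢ Ioo (0 : ℝ) 1,
      (if |ybar x - 1| < r then |d1y x| + |d2y x| else 0) ≤ (J ×ˢ J).indicator (fun _ => c) x := by
    intro x hx
    split_ifs with hlevel
    · obtain ⟨h₁, h₂⟩ := one_sub_lt_sin_of_abs_ybar_sub_one_lt
        ⟨Ioo_subset_Icc_self hx.1, Ioo_subset_Icc_self hx.2⟩ hlevel
      have hxJ : x ∈ J ×ˢ J := by
        refine ⟨?_, ?_⟩ <;> rw [Metric.mem_ball, Real.dist_eq]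
        · exact abs_sub_half_lt_of_one_sub_lt_sin_pi_mul (Ioo_subset_Icc_self hx.1) h₁
        · exact abs_sub_half_lt_of_one_sub_lt_sin_pi_mul (Ioo_subset_Icc_self hx.2) h₂
      rw [indicator_of_mem hxJ]
      exact abs_d1y_add_abs_d2y_le h₁ h₂
    · exact hg_nonneg x
  calc _ ≤ ∫ x in Ioo (0 : ℝ) 1 ×ˢ Ioo (0 : ℝ) 1, (J ×ˢ J).indicator (fun _ => c) x :=
        integral_mono_of_nonneg (ae_of_all _ fun x => by split_ifs <;> positivity) hg.integrableOn
          ((ae_restrict_iff' (measurableSet_Ioo.prod measurableSet_Ioo)).2 (ae_of_all _ hle))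
    _ ≤ ∫ x, (J ×ˢ J).indicator (fun _ => c) x := setIntegral_le_integral hg (ae_of_all _ hg_nonneg)
    _ = 2 * r * c := by
        rw [integral_indicator_const _ hJJ, Measure.volume_eq_prod, measureReal_prod_prod,
          Real.volume_real_ball (sqrt_nonneg _), smul_eq_mul]
        congr 1
        nlinarith [mul_self_sqrt (show 0 ≤ r / 2 by positivity)]

/-- The one-sided limit
`lim_{r→0⁺} (1/r) ∫_{(0,1)²} 1_{|y−1|<r} (|∂₁y| + |∂₂y|) dx` exists and equals `0`. -/
theorem stmt5 :
    Filter.Tendsto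
      (fun r : ℝ => (1 / r) *
        ∫ x in Set.Ioo (0:ℝ) 1 ×ˢ Set.Ioo (0:ℝ) 1,
          (if |ybar x - 1| < r then |d1y x| + |d2y x| else 0))
      (nhdsWithin (0:ℝ) (Set.Ioi 0)) (nhds 0) := by
  have hbound : Tendsto (fun r : ℝ => 4 * π * √(2 * r)) (nhdsWithin 0 (Ioi 0)) (nhds 0) := by
    have hcont : Continuous fun r : ℝ => 4 * π * √(2 * r) := by fun_prop
    simpa using (hcont.tendsto 0).mono_left nhdsWithin_le_nhds
  refine squeeze_zero' ?_ ?_ hbound <;> filter_upwards [self_mem_nhdsWithin] with r (hr : 0 < r)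
  · exact mul_nonneg (by positivity) (setIntegral_nonneg (measurableSet_Ioo.prod measurableSet_Ioo)
      fun x _ => by split_ifs <;> positivity)
  · calc _ ≤ 1 / r * (2 * r * (2 * π * √(2 * r))) := by
          gcongr
          exact setIntegral_abs_ybar_sub_one_lt_le hr
      _ = 4 * π * √(2 * r) := by field_simp; ring
end

section
/- For every r ∈ (0,1), ∫_{(0,1)²} 1_{{|y(x) − 1| < r and ∂₁y(x) > 0}} · |∂₁y(x)| dx = (2/π)·[cos(arcsin(1−r)) + (1−r)·arcsin(1−r)] + r − 1. -/
open Real MeasureTheory Filter Set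

lemma lt_sin_iff_mem_Ioo_arcsin {k θ : ℝ} (hθ : θ ∈ Icc 0 π) :
    k < sin θ ↔ θ ∈ Ioo (arcsin k) (π - arcsin k) := by
  obtain ⟨hθ0, hθπ⟩ := hθ
  have hπ := pi_pos
  rcases lt_or_ge k (-1) with hk | hk
  · rw [arcsin_of_le_neg_one hk.le]
    exact iff_of_true (by linarith [sin_nonneg_of_nonneg_of_le_pi hθ0 hθπ])
      ⟨by linarith, by linarith⟩
  rcases lt_or_ge 1 k with hk' | hk'
  · rw [arcsin_of_one_le hk'.le]
    exact iff_of_false (by linarith [sin_le_one θ]) fun h => by linarith [h.1, h.2]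
  have hk1 : k ∈ Icc (-1) 1 := ⟨hk, hk'⟩
  have harcsin := arcsin_le_pi_div_two k
  rcases le_or_gt θ (π / 2) with hθ2 | hθ2
  · rw [← arcsin_lt_iff_lt_sin hk1 ⟨by linarith, hθ2⟩]
    exact ⟨fun h => ⟨h, by linarith⟩, And.left⟩
  · rw [← sin_pi_sub, ← arcsin_lt_iff_lt_sin hk1 ⟨by linarith, by linarith⟩]
    exact ⟨fun h => ⟨by linarith, by linarith⟩, fun h => by linarith [h.2]⟩

lemma lt_sin_pi_mul_iff {k x : ℝ} (hx : x ∈ Icc 0 1) :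
    k < sin (π * x) ↔ x ∈ Ioo (arcsin k / π) (1 - arcsin k / π) := by
  have hπ := pi_pos
  rw [lt_sin_iff_mem_Ioo_arcsin ⟨by nlinarith [hx.1], by nlinarith [hx.2]⟩]
  have ha : π - arcsin k = π * (1 - arcsin k / π) := by field_simp
  rw [ha, mem_Ioo, mem_Ioo, mul_lt_mul_iff_right₀ hπ, div_lt_iff₀' hπ]

lemma cos_pi_mul_pos_iff {x : ℝ} (hx : x ∈ Ioo 0 1) : 0 < cos (π * x) ↔ x < 1 / 2 := by
  have hπ := pi_pos
  constructor
  · intro h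
    by_contra! hx2
    exact (cos_nonpos_of_pi_div_two_le_of_le (by nlinarith) (by nlinarith [hx.2])).not_gt h
  · intro hx2
    exact cos_pos_of_mem_Ioo ⟨by nlinarith [hx.1], by nlinarith⟩

lemma sin_arcsin_of_nonneg {x : ℝ} (hx : 0 ≤ x) : sin (arcsin x) = min x 1 := by
  rcases le_total x 1 with hx1 | hx1
  · rw [sin_arcsin (by linarith) hx1, min_eq_left hx1]
  · rw [arcsin_of_one_le hx1, sin_pi_div_two, min_eq_right hx1]

lemma setIntegral_prod_symm {α β E : Type*} [MeasurableSpace α] [MeasurableSpace β]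
    [NormedAddCommGroup E] [NormedSpace ℝ E] {μ : Measure α} {ν : Measure β} [SFinite μ]
    [SFinite ν] {f : α × β → E} {s : Set α} {t : Set β}
    (hf : IntegrableOn f (s ×ˢ t) (μ.prod ν)) :
    ∫ z in s ×ˢ t, f z ∂μ.prod ν = ∫ y in t, ∫ x in s, f (x, y) ∂μ ∂ν := by
  rw [IntegrableOn, ← Measure.prod_restrict] at hf
  rw [← Measure.prod_restrict]
  exact integral_prod_symm f hf

lemma setIntegral_indicator_eq_intervalIntegral {E : Type*} [NormedAddCommGroup E]
    [NormedSpace ℝ E] {f : ℝ → E} {A s : Set ℝ} {u v : ℝ} (hs : MeasurableSet s)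
    (hAs : A ∩ s = Ioo u v) (huv : u ≤ v) :
    ∫ x in A, s.indicator f x = ∫ x in u..v, f x := by
  rw [setIntegral_indicator hs, hAs, ← integral_Ioc_eq_integral_Ioo,
    intervalIntegral.integral_of_le huv]

lemma integral_indicator_lt_sin_pi_mul_mul {k s : ℝ} (hk : 0 ≤ k) (hs : 0 < s) :
    ∫ x in Ioo (0:ℝ) 1,
      {x | k < sin (π * x) * s ∧ 0 < π * cos (π * x) * s}.indicator
        (fun x => π * cos (π * x) * s) x
      = max (s - k) 0 := by
  have hπ := pi_pos
  set t := arcsin (k / s) / π with ht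
  have hπt : π * t = arcsin (k / s) := mul_div_cancel₀ _ hπ.ne'
  have ht1 : t ≤ 1 / 2 := by rw [div_le_iff₀ hπ]; linarith [arcsin_le_pi_div_two (k / s)]
  have hset : Ioo 0 1 ∩ {x | k < sin (π * x) * s ∧ 0 < π * cos (π * x) * s}
      = Ioo t (1 / 2) := by
    ext x
    simp only [mem_inter_iff, mem_ofPred_eq, ← div_lt_iff₀ hs, zero_div,
      mul_pos_iff_of_pos_left hπ]
    constructor
    · rintro ⟨hx, hsin, hcos⟩
      exact ⟨((lt_sin_pi_mul_iff (Ioo_subset_Icc_self hx)).1 hsin).1,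
        (cos_pi_mul_pos_iff hx).1 hcos⟩
    · rintro ⟨h1, h2⟩
      have hx : x ∈ Ioo 0 1 :=
        ⟨(div_nonneg (arcsin_nonneg.2 (div_nonneg hk hs.le)) hπ.le).trans_lt h1, by linarith⟩
      exact ⟨hx, (lt_sin_pi_mul_iff (Ioo_subset_Icc_self hx)).2 ⟨h1, by linarith⟩,
        (cos_pi_mul_pos_iff hx).2 h2⟩
  rw [setIntegral_indicator_eq_intervalIntegral (by measurability) hset ht1,
    intervalIntegral.integral_mul_const, intervalIntegral.integral_const_mul,
    intervalIntegral.integral_comp_mul_left (fun x => cos x) hπ.ne', integral_cos, hπt,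
    sin_arcsin_of_nonneg (div_nonneg hk hs.le), smul_eq_mul, mul_one_div, sin_pi_div_two]
  rcases le_total k s with hks | hks
  · rw [min_eq_left ((div_le_one hs).2 hks), max_eq_left (sub_nonneg.2 hks)]
    field_simp
  · rw [min_eq_right ((one_le_div hs).2 hks), max_eq_right (sub_nonpos.2 hks)]
    ring

lemma integral_max_sin_pi_mul_sub {k : ℝ} (hk : 0 ≤ k) :
    ∫ x in Ioo (0:ℝ) 1, max (sin (π * x) - k) 0
      = 2 / π * (cos (arcsin k) + k * arcsin k) - k := by
  have hπ := pi_pos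
  set a := arcsin k / π with ha
  have ha0 : 0 ≤ a := div_nonneg (arcsin_nonneg.2 hk) hπ.le
  have ha1 : a ≤ 1 / 2 := by rw [div_le_iff₀ hπ]; linarith [arcsin_le_pi_div_two k]
  have hset : Ioo 0 1 ∩ {x | k < sin (π * x)} = Ioo a (1 - a) := by
    ext x
    simp only [mem_inter_iff, mem_ofPred_eq]
    constructor
    · rintro ⟨hx, h⟩
      exact (lt_sin_pi_mul_iff (Ioo_subset_Icc_self hx)).1 h
    · intro hx
      have hx01 : x ∈ Ioo 0 1 := ⟨by linarith [hx.1], by linarith [hx.2]⟩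
      exact ⟨hx01, (lt_sin_pi_mul_iff (Ioo_subset_Icc_self hx01)).2 hx⟩
  have hmax : (fun x => max (sin (π * x) - k) 0)
      = {x | k < sin (π * x)}.indicator (fun x => sin (π * x) - k) := by
    ext x
    by_cases h : k < sin (π * x)
    · simp [h, h.le]
    · simp [h, not_lt.1 h]
  have hsin : Continuous fun x => sin (π * x) := by fun_prop
  rw [hmax, setIntegral_indicator_eq_intervalIntegral
      (measurableSet_lt measurable_const hsin.measurable) hset (by linarith),
    intervalIntegral.integral_sub (hsin.intervalIntegrable _ _) intervalIntegrable_const,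
    intervalIntegral.integral_comp_mul_left (fun x => sin x) hπ.ne', integral_sin,
    intervalIntegral.integral_const]
  have hcos : cos (π * (1 - a)) = -cos (arcsin k) := by
    rw [mul_one_sub, ha, mul_div_cancel₀ _ hπ.ne', cos_pi_sub]
  rw [hcos, ha, mul_div_cancel₀ _ hπ.ne', smul_eq_mul, smul_eq_mul]
  field_simp
  ring

lemma ybar_le_one (p : ℝ × ℝ) : ybar p ≤ 1 := by
  refine (le_abs_self _).trans ?_
  rw [ybar, abs_mul]
  exact mul_le_one₀ (abs_sin_le_one _) (abs_nonneg _) (abs_sin_le_one _)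

lemma abs_ybar_sub_one_lt_iff {r : ℝ} (p : ℝ × ℝ) : |ybar p - 1| < r ↔ 1 - r < ybar p := by
  rw [abs_sub_comm, abs_of_nonneg (sub_nonneg.2 (ybar_le_one p)), sub_lt_comm]

lemma continuous_ybar : Continuous ybar := by unfold ybar; fun_prop

lemma continuous_d1y : Continuous d1y := by unfold d1y; fun_prop

/-- For every `r ∈ (0,1)`,
`∫_{(0,1)²} 1_{|y−1|<r, ∂₁y>0} |∂₁y| dx
  = (2/π)(cos(arcsin(1−r)) + (1−r) arcsin(1−r)) + r − 1`. -/
theorem stmt7 (r : ℝ) (hr : r ∈ Set.Ioo (0:ℝ) 1) :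
    (∫ x in Set.Ioo (0:ℝ) 1 ×ˢ Set.Ioo (0:ℝ) 1,
        (if |ybar x - 1| < r ∧ 0 < d1y x then |d1y x| else 0))
      = (2 / π) * (Real.cos (Real.arcsin (1 - r)) + (1 - r) * Real.arcsin (1 - r))
        + r - 1 := by
  set U := {p : ℝ × ℝ | 1 - r < ybar p ∧ 0 < d1y p}
  have hintegrand : (fun p => if |ybar p - 1| < r ∧ 0 < d1y p then |d1y p| else 0)
      = U.indicator d1y := by
    ext p
    simp only [abs_ybar_sub_one_lt_iff]
    by_cases h : 1 - r < ybar p ∧ 0 < d1y p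
    · simp [U, h, abs_of_pos h.2]
    · simp [U, h]
  have hU : IsOpen U :=
    (isOpen_lt continuous_const continuous_ybar).inter (isOpen_lt continuous_const continuous_d1y)
  have hint : IntegrableOn (U.indicator d1y) (Ioo 0 1 ×ˢ Ioo 0 1) :=
    (continuous_d1y.continuousOn.integrableOn_compact
      (isCompact_Icc.prod isCompact_Icc) |>.mono_set
      (prod_mono Ioo_subset_Icc_self Ioo_subset_Icc_self)).indicator hU.measurableSet
  -- `U.indicator d1y (·, y)` unfolds to the integrand of the inner lemma with `s = sin (π y)`
  have hinner : ∀ y ∈ Ioo (0:ℝ) 1,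
      ∫ x in Ioo 0 1, U.indicator d1y (x, y) = max (sin (π * y) - (1 - r)) 0 := fun y hy =>
    integral_indicator_lt_sin_pi_mul_mul (k := 1 - r) (s := sin (π * y)) (by linarith [hr.2])
      (sin_pos_of_pos_of_lt_pi (by nlinarith [hy.1, pi_pos]) (by nlinarith [hy.2, pi_pos]))
  rw [hintegrand, Measure.volume_eq_prod, setIntegral_prod_symm hint,
    setIntegral_congr_fun measurableSet_Ioo hinner,
    integral_max_sin_pi_mul_sub (by linarith [hr.2])]
  ring
end

section
/- For all t, d ∈ ℝ, every sequence (s_n) of positive reals converging to 0, and every sequence (d_n) of reals converging to d, the quotients (a(t + s_n d_n) − a(t))/s_n converge to a'(t;d), where a'(t;d) equals a₀'(t)·d if t < t̄; a₁'(t)·d if t > t̄; a₁'(t̄)·d if t = t̄ and d > 0; a₀'(t̄)·d if t = t̄ and d < 0; and 0 if d = 0. -/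
open Filter Topology

lemma HasDerivAt.tendsto_sub_div_of_tendsto {α : Type*} {l : Filter α} {f : ℝ → ℝ} {f' t d : ℝ}
    (hf : HasDerivAt f f' t) {s e : α → ℝ} (hs : ∀ᶠ n in l, s n ≠ 0)
    (hs0 : Tendsto s l (𝓝 0)) (he : Tendsto e l (𝓝 d)) :
    Tendsto (fun n => (f (t + s n * e n) - f t) / s n) l (𝓝 (f' * d)) := by
  have hstep : Tendsto (fun n => t + s n * e n) l (𝓝 t) := by
    simpa using tendsto_const_nhds.add (hs0.mul he)
  have hstep_bigO : (fun n => t + s n * e n - t) =O[l] s := by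
    simpa using (Asymptotics.isBigO_refl s l).mul (he.isBigO_one ℝ)
  have hrem : Tendsto (fun n => (f (t + s n * e n) - f t - (t + s n * e n - t) * f') / s n) l
      (𝓝 0) :=
    (((hasDerivAt_iff_isLittleO.mp hf).comp_tendsto hstep).trans_isBigO
      hstep_bigO).tendsto_div_nhds_zero
  have hlim : Tendsto (fun n => (f (t + s n * e n) - f t - (t + s n * e n - t) * f') / s n
      + e n * f') l (𝓝 (d * f')) := by
    simpa using hrem.add (he.mul_const f')
  rw [mul_comm f' d]
  refine hlim.congr' ?_
  filter_upwards [hs] with n hn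
  field_simp
  ring

noncomputable def glueAt (tbar : ℝ) (a₀ a₁ : ℝ → ℝ) (x : ℝ) : ℝ := if x ≤ tbar then a₀ x else a₁ x

section glueAt

variable {tbar : ℝ} {a₀ a₁ : ℝ → ℝ}

lemma glueAt_eventuallyEq_left {t : ℝ} (ht : t < tbar) : glueAt tbar a₀ a₁ =ᶠ[𝓝 t] a₀ := by
  filter_upwards [Iio_mem_nhds ht] with x hx
  exact if_pos (le_of_lt hx)

lemma glueAt_eventuallyEq_right {t : ℝ} (ht : tbar < t) : glueAt tbar a₀ a₁ =ᶠ[𝓝 t] a₁ := by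
  filter_upwards [Ioi_mem_nhds ht] with x hx
  exact if_neg (not_le.mpr hx)

lemma glueAt_sub_glueAt_self (hval : a₀ tbar = a₁ tbar) (x : ℝ) :
    glueAt tbar a₀ a₁ x - glueAt tbar a₀ a₁ tbar =
      if x ≤ tbar then a₀ x - a₀ tbar else a₁ x - a₁ tbar := by
  unfold glueAt
  split_ifs <;> simp [hval]

/-- At the break point each quotient is that of `a₀` or of `a₁`: for `d ≠ 0` the sign of `d`
eventually decides which, and for `d = 0` both tend to `0`. -/
lemma tendsto_glueAt_sub_div_at_break {α : Type*} {l : Filter α} {a₀' a₁' d : ℝ}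
    (ha₀ : HasDerivAt a₀ a₀' tbar) (ha₁ : HasDerivAt a₁ a₁' tbar) (hval : a₀ tbar = a₁ tbar)
    {s e : α → ℝ} (hs : ∀ᶠ n in l, 0 < s n) (hs0 : Tendsto s l (𝓝 0)) (he : Tendsto e l (𝓝 d)) :
    Tendsto (fun n => (glueAt tbar a₀ a₁ (tbar + s n * e n) - glueAt tbar a₀ a₁ tbar) / s n) l
      (𝓝 (if 0 < d then a₁' * d else if d < 0 then a₀' * d else 0)) := by
  have hs' : ∀ᶠ n in l, s n ≠ 0 := hs.mono fun n hn => hn.ne'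
  have h₀ := ha₀.tendsto_sub_div_of_tendsto hs' hs0 he
  have h₁ := ha₁.tendsto_sub_div_of_tendsto hs' hs0 he
  simp_rw [glueAt_sub_glueAt_self hval, ite_div]
  rcases lt_trichotomy d 0 with hd | rfl | hd
  · rw [if_neg hd.not_gt, if_pos hd]
    refine h₀.congr' ?_
    filter_upwards [hs, he.eventually_lt_const hd] with n hsn hen
    rw [if_pos (by nlinarith)]
  · rw [mul_zero] at h₀ h₁
    simpa using h₀.if' h₁
  · rw [if_pos hd]
    refine h₁.congr' ?_
    filter_upwards [hs, he.eventually_const_lt hd] with n hsn hen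
    rw [if_neg (by nlinarith)]

end glueAt

/-- Let `a₀, a₁ : ℝ → ℝ` be `C¹` with `a₀ t̄ = a₁ t̄`, and let
`a t = a₀ t` for `t ≤ t̄` and `a t = a₁ t` for `t > t̄`.
For all `t, d ∈ ℝ`, every sequence `(s_n)` of positive reals converging to `0` and every
sequence `(d_n)` converging to `d`, the quotients `(a(t + s_n d_n) − a(t))/s_n` converge to
the directional derivative `a'(t; d)`, given by `a₀'(t) d` if `t < t̄`; `a₁'(t) d` if
`t > t̄`; `a₁'(t̄) d` if `t = t̄, d > 0`; `a₀'(t̄) d` if `t = t̄, d < 0`; and `0` if `d = 0`. -/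
theorem stmt12 (tbar : ℝ) (a₀ a₁ : ℝ → ℝ)
    (h₀ : ContDiff ℝ 1 a₀) (h₁ : ContDiff ℝ 1 a₁) (hval : a₀ tbar = a₁ tbar)
    (t d : ℝ) (s : ℕ → ℝ) (hs : ∀ n, 0 < s n)
    (hs0 : Filter.Tendsto s Filter.atTop (nhds 0))
    (dn : ℕ → ℝ) (hdn : Filter.Tendsto dn Filter.atTop (nhds d)) :
    Filter.Tendsto
      (fun n : ℕ =>
        ((if t + s n * dn n ≤ tbar then a₀ (t + s n * dn n) else a₁ (t + s n * dn n))
          - (if t ≤ tbar then a₀ t else a₁ t)) / s n)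
      Filter.atTop
      (nhds (if t < tbar then deriv a₀ t * d
             else if tbar < t then deriv a₁ t * d
             else if 0 < d then deriv a₁ tbar * d
             else if d < 0 then deriv a₀ tbar * d
             else 0)) := by
  have hderiv {f : ℝ → ℝ} (hf : ContDiff ℝ 1 f) (x : ℝ) : HasDerivAt f (deriv f x) x :=
    (hf.differentiable one_ne_zero x).hasDerivAt
  have hs' : ∀ᶠ n in atTop, s n ≠ 0 := .of_forall fun n => (hs n).ne'
  change Tendsto (fun n => (glueAt tbar a₀ a₁ (t + s n * dn n) - glueAt tbar a₀ a₁ t) / s n) _ _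
  rcases lt_trichotomy t tbar with ht | rfl | ht
  · rw [if_pos ht]
    exact ((hderiv h₀ t).congr_of_eventuallyEq
      (glueAt_eventuallyEq_left ht)).tendsto_sub_div_of_tendsto hs' hs0 hdn
  · rw [if_neg (lt_irrefl t), if_neg (lt_irrefl t)]
    exact tendsto_glueAt_sub_div_at_break (hderiv h₀ t) (hderiv h₁ t) hval
      (.of_forall hs) hs0 hdn
  · rw [if_neg ht.not_gt, if_pos ht]
    exact ((hderiv h₁ t).congr_of_eventuallyEq
      (glueAt_eventuallyEq_right ht)).tendsto_sub_div_of_tendsto hs' hs0 hdn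
end

section
/- Assume additionally that a₀ and a₁ are twice continuously differentiable, and let M > 0. Then there exists a constant C > 0 (depending only on M, δ, a₀ and a₁) such that for all g, ĝ ∈ [−M, M] with |g − ĝ| < δ and all G, Ĝ ∈ ℝ² with G = 0 whenever g = t̄ and Ĝ = 0 whenever ĝ = t̄, one has |Z¹| + |Z²| ≤ C·( |g − ĝ|·|Ĝ| + |G − Ĝ| ) and |Z⁴| ≤ C·( |g − ĝ|·|Ĝ| + |G − Ĝ| )·(χ² + χ³), where |·| denotes the Euclidean norm on ℝ². -/
/-!
On a compact interval containing `[-M, M]` and `t̄`, the `C¹` functions `a₀'` and `a₁'` are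
bounded by and Lipschitz with a common constant `K`. Each term of `Z¹` is `a'(g) G - a'(ĝ) Ĝ` for
one smooth branch, bounded by `|a'(g)| |G - Ĝ| + |a'(g) - a'(ĝ)| |Ĝ|`; `Z²` only lives where
`Ĝ = 0`, so `|G| = |G - Ĝ|`. In `Z⁴` the point `t̄` lies between `g` and `ĝ`, so the two Lipschitz
increments `|g - t̄|` and `|t̄ - ĝ|` add up to `|g - ĝ|`.
-/

open scoped NNReal

theorem ContDiff.exists_bound_and_lipschitzOnWith_deriv {f : ℝ → ℝ} (hf : ContDiff ℝ 2 f)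
    {s : Set ℝ} (hs : IsCompact s) (hs' : Convex ℝ s) :
    ∃ K : ℝ≥0, (∀ x ∈ s, ‖deriv f x‖ ≤ K) ∧ LipschitzOnWith K (deriv f) s := by
  obtain ⟨L, hL⟩ :=
    (hf.deriv' (n := 1)).contDiffOn.exists_lipschitzOnWith one_ne_zero hs' hs
  obtain ⟨B, hB⟩ :=
    hs.exists_bound_of_continuousOn (hf.continuous_deriv one_le_two).continuousOn
  refine ⟨max L B.toNNReal, fun x hx => ?_, hL.weaken (le_max_left _ _)⟩
  calc ‖deriv f x‖ ≤ B := hB x hx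
    _ ≤ B.toNNReal := Real.le_coe_toNNReal B
    _ ≤ max L B.toNNReal := by exact_mod_cast le_max_right _ _

theorem exists_common_bound_and_lipschitzOnWith_deriv {f₀ f₁ : ℝ → ℝ} (hf₀ : ContDiff ℝ 2 f₀)
    (hf₁ : ContDiff ℝ 2 f₁) {s : Set ℝ} (hs : IsCompact s) (hs' : Convex ℝ s) :
    ∃ K : ℝ≥0, 0 < K ∧ (∀ x ∈ s, ‖deriv f₀ x‖ ≤ K) ∧ LipschitzOnWith K (deriv f₀) s ∧
      (∀ x ∈ s, ‖deriv f₁ x‖ ≤ K) ∧ LipschitzOnWith K (deriv f₁) s := by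
  obtain ⟨K₀, hb₀, hl₀⟩ := hf₀.exists_bound_and_lipschitzOnWith_deriv hs hs'
  obtain ⟨K₁, hb₁, hl₁⟩ := hf₁.exists_bound_and_lipschitzOnWith_deriv hs hs'
  have hK₀ : K₀ ≤ max K₀ K₁ + 1 := le_add_right (le_max_left _ _)
  have hK₁ : K₁ ≤ max K₀ K₁ + 1 := le_add_right (le_max_right _ _)
  exact ⟨max K₀ K₁ + 1, by positivity,
    fun x hx => (hb₀ x hx).trans (by exact_mod_cast hK₀), hl₀.weaken hK₀,
    fun x hx => (hb₁ x hx).trans (by exact_mod_cast hK₁), hl₁.weaken hK₁⟩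

section NormBounds

variable {E : Type*} [NormedAddCommGroup E] [NormedSpace ℝ E]

theorem norm_smul_sub_smul_le (c d : ℝ) (v w : E) :
    ‖c • v - d • w‖ ≤ ‖c‖ * ‖v - w‖ + ‖c - d‖ * ‖w‖ := by
  calc ‖c • v - d • w‖ = ‖c • (v - w) + (c - d) • w‖ := by
        rw [smul_sub, sub_smul]; abel_nf
    _ ≤ ‖c‖ * ‖v - w‖ + ‖c - d‖ * ‖w‖ := by
        simpa only [norm_smul] using norm_add_le (c • (v - w)) ((c - d) • w)

theorem norm_ite_smul_le {p : Prop} [Decidable p] {v : E} {B : ℝ} (h : p → ‖v‖ ≤ B) :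
    ‖(if p then (1 : ℝ) else 0) • v‖ ≤ (if p then 1 else 0) * B := by
  split_ifs with hp
  · simpa using h hp
  · simp

theorem norm_ite_smul_le_of_nonneg {p : Prop} [Decidable p] {v : E} {B : ℝ} (hB : 0 ≤ B)
    (h : p → ‖v‖ ≤ B) : ‖(if p then (1 : ℝ) else 0) • v‖ ≤ B :=
  (norm_ite_smul_le h).trans <| by split_ifs <;> simp [hB]

variable {s : Set ℝ} {K : ℝ≥0}

theorem norm_deriv_smul_sub_deriv_smul_le {f : ℝ → ℝ} (hb : ∀ x ∈ s, ‖deriv f x‖ ≤ K)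
    (hl : LipschitzOnWith K (deriv f) s) {x y : ℝ} (hx : x ∈ s) (hy : y ∈ s) (v w : E) :
    ‖deriv f x • v - deriv f y • w‖ ≤ K * (|x - y| * ‖w‖ + ‖v - w‖) := by
  have hlip := hl.dist_le_mul x hx y hy
  rw [dist_eq_norm, Real.dist_eq] at hlip
  calc ‖deriv f x • v - deriv f y • w‖
      ≤ ‖deriv f x‖ * ‖v - w‖ + ‖deriv f x - deriv f y‖ * ‖w‖ :=
        norm_smul_sub_smul_le _ _ _ _
    _ ≤ K * ‖v - w‖ + K * |x - y| * ‖w‖ := by gcongr; exact hb x hx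
    _ = K * (|x - y| * ‖w‖ + ‖v - w‖) := by ring

theorem norm_crossing_term_le {f₀ f₁ : ℝ → ℝ} (hb₀ : ∀ x ∈ s, ‖deriv f₀ x‖ ≤ K)
    (hl₀ : LipschitzOnWith K (deriv f₀) s) (hl₁ : LipschitzOnWith K (deriv f₁) s)
    {x t y : ℝ} (hx : x ∈ s) (ht : t ∈ s) (hy : y ∈ s) (hxty : t ∈ Set.uIcc x y) (v w : E) :
    ‖deriv f₀ x • (v - w) + (deriv f₀ x - deriv f₀ t) • w + (deriv f₁ t - deriv f₁ y) • w‖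
      ≤ K * (|x - y| * ‖w‖ + ‖v - w‖) := by
  have hsplit : dist x t + dist t y = dist x y :=
    dist_add_dist_of_mem_segment (by rwa [segment_eq_uIcc])
  have hl₀' := hl₀.dist_le_mul x hx t ht
  have hl₁' := hl₁.dist_le_mul t ht y hy
  rw [dist_eq_norm] at hl₀' hl₁'
  calc _ ≤ ‖deriv f₀ x‖ * ‖v - w‖ + ‖deriv f₀ x - deriv f₀ t‖ * ‖w‖
          + ‖deriv f₁ t - deriv f₁ y‖ * ‖w‖ := by
        refine norm_add₃_le.trans_eq ?_
        rw [norm_smul, norm_smul, norm_smul]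
    _ ≤ K * ‖v - w‖ + K * dist x t * ‖w‖ + K * dist t y * ‖w‖ := by
        gcongr; exact hb₀ x hx
    _ = K * (|x - y| * ‖w‖ + ‖v - w‖) := by
        rw [← Real.dist_eq, ← hsplit]; ring

end NormBounds

theorem stmt14_general (δ tbar : ℝ) (a₀ a₁ : ℝ → ℝ)
    (h₀ : ContDiff ℝ 2 a₀) (h₁ : ContDiff ℝ 2 a₁)
    (M : ℝ) :
    ∃ C : ℝ, 0 < C ∧
      ∀ (g gh : ℝ) (G Gh : EuclideanSpace ℝ (Fin 2)),
        g ∈ Set.Icc (-M) M → gh ∈ Set.Icc (-M) M → |g - gh| < δ →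
        (g = tbar → G = 0) → (gh = tbar → Gh = 0) →
        -- ‖Z¹‖ + ‖Z²‖ ≤ C (|g − gh| ‖Gh‖ + ‖G − Gh‖)
        (‖(if gh < tbar ∧ g < tbar then (1:ℝ) else 0) • (deriv a₀ g • G - deriv a₀ gh • Gh)
            + (if tbar < gh ∧ tbar < g then (1:ℝ) else 0)
                • (deriv a₁ g • G - deriv a₁ gh • Gh)‖
          + ‖(if gh = tbar ∧ g ≠ tbar then (1:ℝ) else 0)
                • ((if g < tbar then deriv a₀ g else deriv a₁ g) • G)‖
          ≤ C * (|g - gh| * ‖Gh‖ + ‖G - Gh‖))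
        ∧
        -- ‖Z⁴‖ ≤ C (|g − gh| ‖Gh‖ + ‖G − Gh‖) (χ² + χ³)
        (‖(if (tbar < gh ∧ gh < tbar + δ) ∧ (tbar - δ < g ∧ g ≤ tbar) then (1:ℝ) else 0)
              • (deriv a₀ g • (G - Gh) + (deriv a₀ g - deriv a₀ tbar) • Gh
                  + (deriv a₁ tbar - deriv a₁ gh) • Gh)
            + (if (tbar - δ < gh ∧ gh < tbar) ∧ (tbar ≤ g ∧ g < tbar + δ) then (1:ℝ) else 0)
              • (deriv a₁ g • (G - Gh) + (deriv a₁ g - deriv a₁ tbar) • Gh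
                  + (deriv a₀ tbar - deriv a₀ gh) • Gh)‖
          ≤ C * (|g - gh| * ‖Gh‖ + ‖G - Gh‖) *
              ((if (tbar < gh ∧ gh < tbar + δ) ∧ (tbar - δ < g ∧ g ≤ tbar) then (1:ℝ) else 0)
                + (if (tbar - δ < gh ∧ gh < tbar) ∧ (tbar ≤ g ∧ g < tbar + δ)
                    then (1:ℝ) else 0))) := by
  set s := Set.Icc (min (-M) tbar) (max M tbar)
  obtain ⟨K, hK, hb₀, hl₀, hb₁, hl₁⟩ :=
    exists_common_bound_and_lipschitzOnWith_deriv h₀ h₁ (s := s) isCompact_Icc (convex_Icc _ _)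
  have hIcc : Set.Icc (-M) M ⊆ s := Set.Icc_subset_Icc (min_le_left _ _) (le_max_left _ _)
  have ht : tbar ∈ s := ⟨min_le_right _ _, le_max_right _ _⟩
  refine ⟨3 * K, by positivity, fun g gh G Gh hg hgh _ _ hGh0 => ?_⟩
  replace hg := hIcc hg
  replace hgh := hIcc hgh
  set D := |g - gh| * ‖Gh‖ + ‖G - Gh‖
  have hKD : 0 ≤ (K : ℝ) * D := by positivity
  constructor
  · refine (add_le_add (norm_add_le_of_le
      (norm_ite_smul_le_of_nonneg hKD fun _ =>
        norm_deriv_smul_sub_deriv_smul_le hb₀ hl₀ hg hgh G Gh)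
      (norm_ite_smul_le_of_nonneg hKD fun _ =>
        norm_deriv_smul_sub_deriv_smul_le hb₁ hl₁ hg hgh G Gh))
      (norm_ite_smul_le_of_nonneg hKD fun ⟨hgh_eq, _⟩ => ?_)).trans (by linarith)
    have hc : ‖if g < tbar then deriv a₀ g else deriv a₁ g‖ ≤ K := by
      split_ifs
      exacts [hb₀ g hg, hb₁ g hg]
    have hG : ‖G‖ ≤ D := by simp [D, hGh0 hgh_eq]
    rw [norm_smul]
    exact mul_le_mul hc hG (norm_nonneg G) K.coe_nonneg
  · refine (norm_add_le_of_le
      (norm_ite_smul_le fun h => norm_crossing_term_le hb₀ hl₀ hl₁ hg ht hgh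
        (Set.mem_uIcc.2 (Or.inl ⟨h.2.2, h.1.1.le⟩)) G Gh)
      (norm_ite_smul_le fun h => norm_crossing_term_le hb₁ hl₁ hl₀ hg ht hgh
        (Set.mem_uIcc.2 (Or.inr ⟨h.1.2.le, h.2.1⟩)) G Gh)).trans ?_
    rw [← add_mul, mul_comm]
    gcongr
    linarith [K.coe_nonneg]

/-- Bounds on the components `Z¹, Z², Z⁴` of the nonsmooth gradient difference
decomposition: if `a₀, a₁` are `C²` and `M > 0`, then there is `C > 0` such that for all
`g, gh ∈ [−M, M]` with `|g − gh| < δ` and all `G, Gh ∈ ℝ²` with `G = 0` whenever `g = t̄`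
and `Gh = 0` whenever `gh = t̄`, one has
`|Z¹| + |Z²| ≤ C(|g − gh| |Gh| + |G − Gh|)` and
`|Z⁴| ≤ C(|g − gh| |Gh| + |G − Gh|)(χ² + χ³)`. -/
theorem stmt14 (δ tbar : ℝ) (hδ : 0 < δ) (a₀ a₁ : ℝ → ℝ)
    (h₀ : ContDiff ℝ 2 a₀) (h₁ : ContDiff ℝ 2 a₁) (hval : a₀ tbar = a₁ tbar)
    (M : ℝ) (hM : 0 < M) :
    ∃ C : ℝ, 0 < C ∧
      ∀ (g gh : ℝ) (G Gh : EuclideanSpace ℝ (Fin 2)),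
        g ∈ Set.Icc (-M) M → gh ∈ Set.Icc (-M) M → |g - gh| < δ →
        (g = tbar → G = 0) → (gh = tbar → Gh = 0) →
        -- ‖Z¹‖ + ‖Z²‖ ≤ C (|g − gh| ‖Gh‖ + ‖G − Gh‖)
        (‖(if gh < tbar ∧ g < tbar then (1:ℝ) else 0) • (deriv a₀ g • G - deriv a₀ gh • Gh)
            + (if tbar < gh ∧ tbar < g then (1:ℝ) else 0)
                • (deriv a₁ g • G - deriv a₁ gh • Gh)‖
          + ‖(if gh = tbar ∧ g ≠ tbar then (1:ℝ) else 0)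
                • ((if g < tbar then deriv a₀ g else deriv a₁ g) • G)‖
          ≤ C * (|g - gh| * ‖Gh‖ + ‖G - Gh‖))
        ∧
        -- ‖Z⁴‖ ≤ C (|g − gh| ‖Gh‖ + ‖G − Gh‖) (χ² + χ³)
        (‖(if (tbar < gh ∧ gh < tbar + δ) ∧ (tbar - δ < g ∧ g ≤ tbar) then (1:ℝ) else 0)
              • (deriv a₀ g • (G - Gh) + (deriv a₀ g - deriv a₀ tbar) • Gh
                  + (deriv a₁ tbar - deriv a₁ gh) • Gh)
            + (if (tbar - δ < gh ∧ gh < tbar) ∧ (tbar ≤ g ∧ g < tbar + δ) then (1:ℝ) else 0)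
              • (deriv a₁ g • (G - Gh) + (deriv a₁ g - deriv a₁ tbar) • Gh
                  + (deriv a₀ tbar - deriv a₀ gh) • Gh)‖
          ≤ C * (|g - gh| * ‖Gh‖ + ‖G - Gh‖) *
              ((if (tbar < gh ∧ gh < tbar + δ) ∧ (tbar - δ < g ∧ g ≤ tbar) then (1:ℝ) else 0)
                + (if (tbar - δ < gh ∧ gh < tbar) ∧ (tbar ≤ g ∧ g < tbar + δ)
                    then (1:ℝ) else 0))) :=
  stmt14_general δ tbar a₀ a₁ h₀ h₁ M
end

section
/- Let y, ŷ : Ω → ℝ be Lipschitz continuous, assume that for almost every x ∈ Ω with ŷ(x) = t̄ the (almost-everywhere defined) gradient of ŷ vanishes at x, and set κ := r + sup_{x∈Ω} |y(x) − ŷ(x)|. Then for almost every x ∈ Ω: V(y,r)(x) ≤ V(ŷ,κ)(x) + σ₀·( |∂₁y(x) − ∂₁ŷ(x)| + |∂₂y(x) − ∂₂ŷ(x)| ). -/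
open Real MeasureTheory

/-- The function `V(y,r)(x) = σ₀ (1_{0<|y−t̄|≤r} |∂₁y| + 1_{0<|y−t̄|≤r} |∂₂y|)(x)`,
with the a.e.-defined partial derivatives realized by `fderivWithin` on `Ω`. -/
noncomputable def Vfun (σ₀ tbar : ℝ) (Ω : Set (EuclideanSpace ℝ (Fin 2)))
    (y : EuclideanSpace ℝ (Fin 2) → ℝ) (r : ℝ) (x : EuclideanSpace ℝ (Fin 2)) : ℝ :=
  σ₀ * ((if 0 < |y x - tbar| ∧ |y x - tbar| ≤ r then (1:ℝ) else 0)
          * |fderivWithin ℝ y Ω x (EuclideanSpace.single (0 : Fin 2) (1:ℝ))|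
        + (if 0 < |y x - tbar| ∧ |y x - tbar| ≤ r then (1:ℝ) else 0)
          * |fderivWithin ℝ y Ω x (EuclideanSpace.single (1 : Fin 2) (1:ℝ))|)

/-- Let `y, ŷ` be Lipschitz on the open bounded set `Ω ⊂ ℝ²`, assume that for a.e.
`x ∈ Ω` with `ŷ(x) = t̄` the gradient of `ŷ` vanishes at `x`, and set
`κ := r + sup_{x∈Ω} |y(x) − ŷ(x)|`. Then for a.e. `x ∈ Ω`:
`V(y,r)(x) ≤ V(ŷ,κ)(x) + σ₀ (|∂₁y(x) − ∂₁ŷ(x)| + |∂₂y(x) − ∂₂ŷ(x)|)`. -/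
theorem stmt15 (Ω : Set (EuclideanSpace ℝ (Fin 2)))
    (hΩo : IsOpen Ω) (hΩb : Bornology.IsBounded Ω)
    (tbar σ₀ r : ℝ) (hσ : 0 ≤ σ₀) (hr : 0 < r)
    (y yh : EuclideanSpace ℝ (Fin 2) → ℝ) (Ky Kyh : NNReal)
    (hy : LipschitzOnWith Ky y Ω) (hyh : LipschitzOnWith Kyh yh Ω)
    (hgrad : ∀ᵐ x ∂(volume.restrict Ω), yh x = tbar → fderivWithin ℝ yh Ω x = 0) :
    ∀ᵐ x ∂(volume.restrict Ω),
      Vfun σ₀ tbar Ω y r x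
        ≤ Vfun σ₀ tbar Ω yh (r + sSup ((fun x => |y x - yh x|) '' Ω)) x
          + σ₀ * (|fderivWithin ℝ y Ω x (EuclideanSpace.single (0 : Fin 2) (1:ℝ))
                    - fderivWithin ℝ yh Ω x (EuclideanSpace.single (0 : Fin 2) (1:ℝ))|
                  + |fderivWithin ℝ y Ω x (EuclideanSpace.single (1 : Fin 2) (1:ℝ))
                    - fderivWithin ℝ yh Ω x (EuclideanSpace.single (1 : Fin 2) (1:ℝ))|) := by
  have hmem := self_mem_ae_restrict (μ := volume) hΩo.measurableSet
  have hlip : LipschitzOnWith (1 * (Ky + Kyh)) (fun x => |y x - yh x|) Ω :=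
    lipschitzWith_one_norm.comp_lipschitzOnWith (hy.sub hyh)
  filter_upwards [hmem, hgrad] with x hx hg
  set a1 := fderivWithin ℝ y Ω x (EuclideanSpace.single (0 : Fin 2) (1:ℝ)) with ha1
  set a2 := fderivWithin ℝ y Ω x (EuclideanSpace.single (1 : Fin 2) (1:ℝ)) with ha2
  set b1 := fderivWithin ℝ yh Ω x (EuclideanSpace.single (0 : Fin 2) (1:ℝ)) with hb1
  set b2 := fderivWithin ℝ yh Ω x (EuclideanSpace.single (1 : Fin 2) (1:ℝ)) with hb2
  by_cases hc : 0 < |y x - tbar| ∧ |y x - tbar| ≤ r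
  · have hbdd : BddAbove ((fun x => |y x - yh x|) '' Ω) := by
      refine ⟨|y x - yh x| + (1 * (Ky + Kyh) : NNReal) * Metric.diam Ω, ?_⟩
      rintro _ ⟨z, hz, rfl⟩
      have h1 := hlip.dist_le_mul z hz x hx
      have h2 : dist z x ≤ Metric.diam Ω := Metric.dist_le_diam_of_mem hΩb hz hx
      have h3 : |y z - yh z| - |y x - yh x| ≤ dist (|y z - yh z|) (|y x - yh x|) := by
        rw [Real.dist_eq]; exact le_abs_self _
      have h4 : ((1 * (Ky + Kyh) : NNReal) : ℝ) * dist z x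
          ≤ ((1 * (Ky + Kyh) : NNReal) : ℝ) * Metric.diam Ω :=
        mul_le_mul_of_nonneg_left h2 (by positivity)
      linarith
    have hsup : |y x - yh x| ≤ sSup ((fun x => |y x - yh x|) '' Ω) :=
      le_csSup hbdd ⟨x, hx, rfl⟩
    have hκ : |yh x - tbar| ≤ r + sSup ((fun x => |y x - yh x|) '' Ω) := by
      have h5 : |yh x - tbar| ≤ |y x - tbar| + |y x - yh x| := by
        calc |yh x - tbar| = |(y x - tbar) - (y x - yh x)| := by ring_nf
        _ ≤ |y x - tbar| + |y x - yh x| := abs_sub _ _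
      linarith [hc.2]
    by_cases ht : yh x = tbar
    · have h0 := hg ht
      have hb1z : b1 = 0 := by rw [hb1, h0]; simp
      have hb2z : b2 = 0 := by rw [hb2, h0]; simp
      simp only [Vfun, ← ha1, ← ha2, ← hb1, ← hb2, if_pos hc, hb1z, hb2z, ht]
      simp only [sub_self, abs_zero, lt_irrefl, false_and, if_false, sub_zero]
      nlinarith [abs_nonneg a1, abs_nonneg a2]
    · have hpos : 0 < |yh x - tbar| := by
        simp only [abs_pos, sub_ne_zero]; exact ht
      have hcond : 0 < |yh x - tbar| ∧
          |yh x - tbar| ≤ r + sSup ((fun x => |y x - yh x|) '' Ω) := ⟨hpos, hκ⟩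
      simp only [Vfun, ← ha1, ← ha2, ← hb1, ← hb2, if_pos hc, if_pos hcond]
      have e1 : |a1| ≤ |b1| + |a1 - b1| := by
        calc |a1| = |b1 + (a1 - b1)| := by ring_nf
        _ ≤ |b1| + |a1 - b1| := abs_add_le _ _
      have e2 : |a2| ≤ |b2| + |a2 - b2| := by
        calc |a2| = |b2 + (a2 - b2)| := by ring_nf
        _ ≤ |b2| + |a2 - b2| := abs_add_le _ _
      nlinarith [mul_le_mul_of_nonneg_left (add_le_add e1 e2) hσ]
  · simp only [Vfun, ← ha1, ← ha2, ← hb1, ← hb2, if_neg hc]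
    have hnn : (0:ℝ) ≤ if 0 < |yh x - tbar| ∧
        |yh x - tbar| ≤ r + sSup ((fun x => |y x - yh x|) '' Ω) then (1:ℝ) else 0 := by
      split_ifs <;> norm_num
    nlinarith [abs_nonneg b1, abs_nonneg b2, abs_nonneg (a1 - b1), abs_nonneg (a2 - b2),
      mul_nonneg hnn (abs_nonneg b1), mul_nonneg hnn (abs_nonneg b2)]
end

section
/- For every r ∈ (0,1), the set {x ∈ (0,1)×(0,1) : |y(x) − 1| < r and ∂₁y(x) > 0} equals the set of all x = (x₁,x₂) ∈ ℝ² such that (1/π)·arcsin(1−r) < x₂ < 1 − (1/π)·arcsin(1−r) and (1/π)·arcsin((1−r)/sin(π x₂)) < x₁ < 1/2. -/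
open Real MeasureTheory Set

lemma aux_sin_gt {c x : ℝ} (hc0 : 0 < c) (hc1 : c < 1) (hx0 : 0 < x) (hx1 : x < π) :
    c < Real.sin x ↔ Real.arcsin c < x ∧ x < π - Real.arcsin c := by
  have hπ := Real.pi_pos
  have hca : c ∈ Icc (-1:ℝ) 1 := ⟨by linarith, hc1.le⟩
  have hA : ∀ z, 0 < z → z < π → c < Real.sin z → Real.arcsin c < z := by
    intro z hz0 hz1 hz
    rcases le_or_gt z (π/2) with h|h
    · exact (Real.arcsin_lt_iff_lt_sin hca ⟨by linarith, h⟩).2 hz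
    · exact lt_of_lt_of_le (Real.arcsin_lt_pi_div_two.2 hc1) h.le
  constructor
  · intro h
    refine ⟨hA x hx0 hx1 h, ?_⟩
    have := hA (π - x) (by linarith) (by linarith) (by rwa [Real.sin_pi_sub])
    linarith
  · rintro ⟨h1, h2⟩
    rcases le_or_gt x (π/2) with h|h
    · exact (Real.arcsin_lt_iff_lt_sin hca ⟨by linarith, h⟩).1 h1
    · have harc : 0 < Real.arcsin c := Real.arcsin_pos.2 hc0
      have h3 : Real.arcsin c < π - x := by linarith
      have := (Real.arcsin_lt_iff_lt_sin hca ⟨by linarith, by linarith⟩).1 h3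
      rwa [Real.sin_pi_sub] at this

/-- For every `r ∈ (0,1)`, the set `{x ∈ (0,1)² : |y(x) − 1| < r, ∂₁y(x) > 0}` equals the
set of all `x = (x₁,x₂)` with `(1/π) arcsin(1−r) < x₂ < 1 − (1/π) arcsin(1−r)` and
`(1/π) arcsin((1−r)/sin(π x₂)) < x₁ < 1/2`. -/
theorem stmt18 (r : ℝ) (hr : r ∈ Set.Ioo (0:ℝ) 1) :
    {x : ℝ × ℝ | x ∈ Set.Ioo (0:ℝ) 1 ×ˢ Set.Ioo (0:ℝ) 1 ∧ |ybar x - 1| < r ∧ 0 < d1y x}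
      = {x : ℝ × ℝ |
          (1 / π * Real.arcsin (1 - r) < x.2 ∧ x.2 < 1 - 1 / π * Real.arcsin (1 - r))
          ∧ (1 / π * Real.arcsin ((1 - r) / Real.sin (π * x.2)) < x.1 ∧ x.1 < 1 / 2)} := by
  obtain ⟨hr0, hr1⟩ := hr
  have hπ := Real.pi_pos
  have hs0 : 0 < 1 - r := by linarith
  have hs1 : 1 - r < 1 := by linarith
  have key : ∀ a t : ℝ, 1 / π * a < t ↔ a < π * t := fun a t => by
    rw [div_mul_eq_mul_div, div_lt_iff₀ hπ]
    constructor <;> intro h <;> linarith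
  ext ⟨x₁, x₂⟩
  simp only [Set.mem_setOf_eq, Set.mem_prod, Set.mem_Ioo, ybar, d1y]
  constructor
  · rintro ⟨⟨⟨h10, h11⟩, ⟨h20, h21⟩⟩, habs, hd⟩
    have hπ1 : 0 < π * x₁ := by positivity
    have hπ1' : π * x₁ < π := by nlinarith
    have hπ2 : 0 < π * x₂ := by positivity
    have hπ2' : π * x₂ < π := by nlinarith
    have hs2 : 0 < Real.sin (π * x₂) := Real.sin_pos_of_pos_of_lt_pi hπ2 hπ2'
    have hs1' : 0 < Real.sin (π * x₁) := Real.sin_pos_of_pos_of_lt_pi hπ1 hπ1'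
    have hcos : 0 < Real.cos (π * x₁) := by
      by_contra h
      push_neg at h
      have h1 : π * Real.cos (π * x₁) ≤ 0 := mul_nonpos_of_nonneg_of_nonpos hπ.le h
      have h2 : π * Real.cos (π * x₁) * Real.sin (π * x₂) ≤ 0 :=
        mul_nonpos_of_nonpos_of_nonneg h1 hs2.le
      linarith
    have hx1half : x₁ < 1 / 2 := by
      by_contra h
      push_neg at h
      have : Real.cos (π * x₁) ≤ 0 :=
        Real.cos_nonpos_of_pi_div_two_le_of_le (by nlinarith) (by nlinarith)
      linarith
    rw [abs_lt] at habs
    have hy : 1 - r < Real.sin (π * x₁) * Real.sin (π * x₂) := by linarith [habs.1]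
    have hsx1le : Real.sin (π * x₁) ≤ 1 := Real.sin_le_one _
    have hsin2gt : 1 - r < Real.sin (π * x₂) := by nlinarith
    have h2 := (aux_sin_gt hs0 hs1 hπ2 hπ2').1 hsin2gt
    have hc0 : 0 < (1 - r) / Real.sin (π * x₂) := by positivity
    have hc1 : (1 - r) / Real.sin (π * x₂) < 1 := by
      rw [div_lt_one hs2]; exact hsin2gt
    have hcx1 : (1 - r) / Real.sin (π * x₂) < Real.sin (π * x₁) := by
      rw [div_lt_iff₀ hs2]; nlinarith
    have h1 := (aux_sin_gt hc0 hc1 hπ1 hπ1').1 hcx1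
    refine ⟨⟨(key _ _).2 h2.1, ?_⟩, (key _ _).2 h1.1, hx1half⟩
    have : 1 / π * Real.arcsin (1 - r) < 1 - x₂ := by
      rw [key]; nlinarith [h2.2]
    linarith
  · rintro ⟨⟨h2l, h2r⟩, ⟨h1l, h1r⟩⟩
    have ha0 : 0 < Real.arcsin (1 - r) := Real.arcsin_pos.2 hs0
    have ha1 : Real.arcsin (1 - r) < π / 2 := Real.arcsin_lt_pi_div_two.2 hs1
    have h2l' : Real.arcsin (1 - r) < π * x₂ := (key _ _).1 h2l
    have h2r' : π * x₂ < π - Real.arcsin (1 - r) := by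
      have : 1 / π * Real.arcsin (1 - r) < 1 - x₂ := by linarith
      have := (key _ _).1 this
      nlinarith
    have hx20 : 0 < x₂ := by nlinarith [h2l']
    have hx21 : x₂ < 1 := by nlinarith [h2r']
    have hπ2 : 0 < π * x₂ := by positivity
    have hπ2' : π * x₂ < π := by nlinarith
    have hsin2gt : 1 - r < Real.sin (π * x₂) := (aux_sin_gt hs0 hs1 hπ2 hπ2').2 ⟨h2l', h2r'⟩
    have hs2 : 0 < Real.sin (π * x₂) := by linarith
    have hc0 : 0 < (1 - r) / Real.sin (π * x₂) := by positivity
    have hc1 : (1 - r) / Real.sin (π * x₂) < 1 := by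
      rw [div_lt_one hs2]; exact hsin2gt
    have hac0 : 0 < Real.arcsin ((1 - r) / Real.sin (π * x₂)) := Real.arcsin_pos.2 hc0
    have hac1 : Real.arcsin ((1 - r) / Real.sin (π * x₂)) < π / 2 :=
      Real.arcsin_lt_pi_div_two.2 hc1
    have h1l' : Real.arcsin ((1 - r) / Real.sin (π * x₂)) < π * x₁ := (key _ _).1 h1l
    have hx10 : 0 < x₁ := by
      have : 0 < 1 / π * Real.arcsin ((1 - r) / Real.sin (π * x₂)) := by positivity
      linarith
    have hπ1 : 0 < π * x₁ := by positivity
    have hπ1half : π * x₁ < π / 2 := by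
      have := mul_lt_mul_of_pos_left h1r hπ
      linarith
    have hπ1' : π * x₁ < π := by linarith
    have hsin1gt : (1 - r) / Real.sin (π * x₂) < Real.sin (π * x₁) :=
      (aux_sin_gt hc0 hc1 hπ1 hπ1').2 ⟨h1l', by linarith⟩
    have hy : 1 - r < Real.sin (π * x₁) * Real.sin (π * x₂) := by
      rw [div_lt_iff₀ hs2] at hsin1gt
      exact hsin1gt
    have hyle : Real.sin (π * x₁) * Real.sin (π * x₂) ≤ 1 :=
      mul_le_one₀ (Real.sin_le_one _) hs2.le (Real.sin_le_one _)
    have hcos : 0 < Real.cos (π * x₁) :=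
      Real.cos_pos_of_mem_Ioo ⟨by linarith, hπ1half⟩
    refine ⟨⟨⟨hx10, by linarith⟩, ⟨hx20, hx21⟩⟩, ?_, by positivity⟩
    rw [abs_lt]
    constructor <;> linarith
end
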